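/- arXiv:2511.11474 — 2 statements merged into one kernel-verified Lean document; each statement's English description precedes it below -/
import Mathlib

section
/- Let φ, ψ ∈ L²([t₀,T]) and f(t,τ) = φ(t)ψ(τ)𝟙(τ ≤ t) + ψ(t)φ(τ)𝟙(t < τ). For ε > 0 define the averaging S_ε f(t,τ) = (1/(4ε²)) ∫_{|t−θ|≤ε, |τ−ϑ|≤ε} f(θ,ϑ)dθdϑ, where f is extended by zero outside [t₀,T]². Then lim_{ε→0} ∫_{t₀}^{T} S_ε f(t,t) dt = ∫_{t₀}^{T} φ(t)ψ(t) dt. -/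
/-!
Extend φ, ψ by zero to Φ, Ψ ∈ L²(ℝ) ∩ L¹(ℝ); the integrand becomes the kernel
`orderedProd Φ Ψ`, integrable on ℝ². Substituting θ = a + t, ϑ = b + t and applying Fubini turns
∫ S_ε f(t,t) dt into the average over the square [-ε,ε]² of
F(a,b) = ∫_{t₀}^T `orderedProd Φ Ψ` (a + t) (b + t) dt.
For b ≤ a this is the L²([t₀,T]) pairing of the translates Φ(a + ·) and Ψ(b + ·), for a < b the
same with Φ and Ψ exchanged, and the two agree on the diagonal. Translation acts continuously on
L²(ℝ), so F is continuous with F(0,0) = ∫ φψ, and averages of a continuous function over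
shrinking squares converge to its value at the centre.
-/

open MeasureTheory Set Filter Topology Metric
open scoped ENNReal

theorem continuous_setIntegral_comp_add_mul_comp_add {G : Type*} [AddGroup G]
    [TopologicalSpace G] [IsTopologicalAddGroup G] [MeasurableSpace G] [BorelSpace G]
    {μ : Measure G} [IsLocallyFiniteMeasure μ] [μ.InnerRegularCompactLTTop]
    [μ.IsAddLeftInvariant] {u v : G → ℝ} (hu : MemLp u 2 μ) (hv : MemLp v 2 μ) (s : Set G) :
    Continuous fun p : G × G => ∫ t in s, u (p.1 + t) * v (p.2 + t) ∂μ := by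
  have : Fact ((2 : ℝ≥0∞) ≠ ∞) := ⟨ENNReal.ofNat_ne_top⟩
  let R := LpToLpRestrictCLM G ℝ ℝ μ 2 s
  have hinner : ∀ p : G × G, ∫ t in s, u (p.1 + t) * v (p.2 + t) ∂μ =
      inner ℝ (R (DomAddAct.mk p.1 +ᵥ hu.toLp u)) (R (DomAddAct.mk p.2 +ᵥ hv.toLp v)) := by
    intro p
    rw [L2.inner_def]
    refine integral_congr_ae ?_
    filter_upwards [LpToLpRestrictCLM_coeFn ℝ s (DomAddAct.mk p.1 +ᵥ hu.toLp u),
      LpToLpRestrictCLM_coeFn ℝ s (DomAddAct.mk p.2 +ᵥ hv.toLp v),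
      ae_restrict_of_ae (DomAddAct.mk_vadd_toLp p.1 hu ▸ MemLp.coeFn_toLp _),
      ae_restrict_of_ae (DomAddAct.mk_vadd_toLp p.2 hv ▸ MemLp.coeFn_toLp _)] with t h1 h2 h3 h4
    rw [real_inner_eq_re_inner, h1, h2, h3, h4]
    simp [mul_comm]
  simp_rw [hinner]
  have hτ : ∀ w : Lp ℝ 2 μ, Continuous fun c : G => DomAddAct.mk c +ᵥ w := fun w =>
    DomAddAct.continuous_mk.vadd continuous_const
  exact (R.continuous.comp ((hτ _).comp continuous_fst)).inner
    (R.continuous.comp ((hτ _).comp continuous_snd))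

theorem MeasureTheory.Integrable.comp_add_prod {α G E : Type*} [MeasurableSpace α] [AddGroup G]
    [MeasurableSpace G] [MeasurableAdd₂ G] [NormedAddCommGroup E] {μ : Measure α}
    [IsFiniteMeasure μ] {ν : Measure G} [SFinite ν] [ν.IsAddRightInvariant] {g : G → E}
    (hg : Integrable g ν) {d : α → G} (hd : Measurable d) :
    Integrable (fun q : α × G => g (q.2 + d q.1)) (μ.prod ν) := by
  have hshear : MeasurePreserving (fun q : α × G => (q.1, q.2 + d q.1)) (μ.prod ν) (μ.prod ν) :=
    (MeasurePreserving.id μ).skew_product (measurable_snd.add (hd.comp measurable_fst))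
      (Eventually.of_forall fun a => map_add_right_eq_self ν (d a))
  exact (hshear.integrable_comp (hg.comp_snd μ).aestronglyMeasurable).2 (hg.comp_snd μ)

theorem ContinuousAt.tendsto_inv_smul_setIntegral {X ι E : Type*} [TopologicalSpace X]
    [MeasurableSpace X] [OpensMeasurableSpace X] [NormedAddCommGroup E] [NormedSpace ℝ E]
    [CompleteSpace E] {μ : Measure X} [IsLocallyFiniteMeasure μ] {f : X → E} {x : X}
    (hf : ContinuousAt f x) (hfm : StronglyMeasurableAtFilter f (𝓝 x) μ) {s : ι → Set X}
    {l : Filter ι} (hs : Tendsto s l (𝓝 x).smallSets) {m : ι → ℝ}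
    (hm : ∀ᶠ i in l, μ.real (s i) = m i) (hm₀ : ∀ᶠ i in l, m i ≠ 0) :
    Tendsto (fun i => (m i)⁻¹ • ∫ y in s i, f y ∂μ) l (𝓝 (f x)) := by
  have h := (hf.integral_sub_linear_isLittleO_ae hfm hs m hm).tendsto_inv_smul_nhds_zero
  rw [← zero_add (f x)]
  refine (h.add_const (f x)).congr' ?_
  filter_upwards [hm₀] with i hi
  rw [smul_sub, smul_smul, inv_mul_cancel₀ hi, one_smul, sub_add_cancel]

theorem volume_real_closedBall_real_prod (x : ℝ × ℝ) {r : ℝ} (hr : 0 ≤ r) :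
    volume.real (closedBall x r) = 4 * r ^ 2 := by
  rw [← closedBall_prod_same, Measure.volume_eq_prod, measureReal_prod_prod,
    Real.volume_real_closedBall hr, Real.volume_real_closedBall hr]
  ring

theorem setIntegral_closedBall_eq_integral_integral_Icc {E : Type*} [NormedAddCommGroup E]
    [NormedSpace ℝ E] {k : ℝ × ℝ → E} (x : ℝ × ℝ) (r : ℝ) (hk : IntegrableOn k (closedBall x r)) :
    ∫ p in closedBall x r, k p =
      ∫ θ in Icc (x.1 - r) (x.1 + r), ∫ ϑ in Icc (x.2 - r) (x.2 + r), k (θ, ϑ) := by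
  rw [← Real.closedBall_eq_Icc, ← Real.closedBall_eq_Icc, ← setIntegral_prod,
    closedBall_prod_same, Measure.volume_eq_prod]
  rwa [closedBall_prod_same, ← Measure.volume_eq_prod]

theorem integral_integral_Icc_integral_Icc_diag {E : Type*} [NormedAddCommGroup E]
    [NormedSpace ℝ E] {k : ℝ → ℝ → E} (hk : Integrable (Function.uncurry k)) {μ : Measure ℝ}
    [IsFiniteMeasure μ] (r : ℝ) :
    ∫ t, (∫ θ in Icc (t - r) (t + r), ∫ ϑ in Icc (t - r) (t + r), k θ ϑ) ∂μ =
      ∫ p in closedBall (0 : ℝ × ℝ) r, ∫ t, k (p.1 + t) (p.2 + t) ∂μ := by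
  have htranslate : ∀ t : ℝ, ∫ θ in Icc (t - r) (t + r), ∫ ϑ in Icc (t - r) (t + r), k θ ϑ =
      ∫ p in closedBall (0 : ℝ × ℝ) r, Function.uncurry k (p + (t, t)) := by
    intro t
    refine (setIntegral_closedBall_eq_integral_integral_Icc (t, t) r hk.integrableOn).symm.trans ?_
    rw [← (measurePreserving_add_right volume (t, t)).setIntegral_preimage_emb
      (measurableEmbedding_addRight (t, t))]
    simp
  refine (integral_congr_ae (ae_of_all _ htranslate)).trans (integral_integral_swap ?_)
  exact (hk.comp_add_prod (measurable_id.prodMk measurable_id)).mono_measure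
    (Measure.prod_mono le_rfl Measure.restrict_le_self)

noncomputable def orderedProd (u v : ℝ → ℝ) (θ ϑ : ℝ) : ℝ :=
  if ϑ ≤ θ then u θ * v ϑ else v θ * u ϑ

theorem continuous_setIntegral_orderedProd {u v : ℝ → ℝ} (hu : MemLp u 2) (hv : MemLp v 2)
    (s : Set ℝ) :
    Continuous fun p : ℝ × ℝ => ∫ t in s, orderedProd u v (p.1 + t) (p.2 + t) := by
  have hsplit : (fun p : ℝ × ℝ => ∫ t in s, orderedProd u v (p.1 + t) (p.2 + t)) =
      fun p => if p.2 ≤ p.1 then ∫ t in s, u (p.1 + t) * v (p.2 + t)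
        else ∫ t in s, v (p.1 + t) * u (p.2 + t) := by
    ext p
    split_ifs with h <;> simp [orderedProd, h]
  rw [hsplit]
  refine Continuous.if_le (continuous_setIntegral_comp_add_mul_comp_add hu hv s)
    (continuous_setIntegral_comp_add_mul_comp_add hv hu s) continuous_snd continuous_fst ?_
  intro p hp
  simp [hp, mul_comm]

theorem integrable_uncurry_orderedProd {μ : Measure ℝ} [SFinite μ] {u v : ℝ → ℝ}
    (hu : Integrable u μ) (hv : Integrable v μ) :
    Integrable (Function.uncurry (orderedProd u v)) (μ.prod μ) := by
  have hs : MeasurableSet {p : ℝ × ℝ | p.2 ≤ p.1} := measurableSet_le measurable_snd measurable_fst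
  classical
  refine (Integrable.piecewise hs (hu.mul_prod hv).integrableOn
    (hv.mul_prod hu).integrableOn).congr (ae_of_all _ fun p => ?_)
  simp only [Set.piecewise, Set.mem_ofPred_eq, Function.uncurry, orderedProd]

theorem stmt_8_general (t₀ T : ℝ)
    (φ ψ : Lp ℝ 2 (volume.restrict (Icc t₀ T)))
    (f : ℝ → ℝ → ℝ)
    (hf : ∀ t τ : ℝ, f t τ =
      φ t * ψ τ * (if τ ≤ t then 1 else 0) + ψ t * φ τ * (if t < τ then 1 else 0)) :
    Tendsto
      (fun ε : ℝ =>
        ∫ t in Icc t₀ T,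
          (1 / (4 * ε ^ 2)) *
            ∫ θ in Icc (t - ε) (t + ε), ∫ ϑ in Icc (t - ε) (t + ε),
              (if θ ∈ Icc t₀ T ∧ ϑ ∈ Icc t₀ T then f θ ϑ else 0))
      (nhdsWithin 0 (Ioi 0))
      (nhds (∫ t in Icc t₀ T, φ t * ψ t)) := by
  set Φ := (Icc t₀ T).indicator φ
  set Ψ := (Icc t₀ T).indicator ψ
  have hΦ : MemLp Φ 2 := (memLp_indicator_iff_restrict measurableSet_Icc).2 (Lp.memLp φ)
  have hΨ : MemLp Ψ 2 := (memLp_indicator_iff_restrict measurableSet_Icc).2 (Lp.memLp ψ)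
  have hΦ₁ : Integrable Φ :=
    (integrable_indicator_iff measurableSet_Icc).2 ((Lp.memLp φ).integrable one_le_two)
  have hΨ₁ : Integrable Ψ :=
    (integrable_indicator_iff measurableSet_Icc).2 ((Lp.memLp ψ).integrable one_le_two)
  have hK : Integrable (Function.uncurry (orderedProd Φ Ψ)) :=
    integrable_uncurry_orderedProd hΦ₁ hΨ₁
  have hf_eq : ∀ θ ϑ,
      (if θ ∈ Icc t₀ T ∧ ϑ ∈ Icc t₀ T then f θ ϑ else 0) = orderedProd Φ Ψ θ ϑ := by
    intro θ ϑ
    rcases le_or_gt ϑ θ with h | h <;>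
      by_cases hθ : θ ∈ Icc t₀ T <;> by_cases hϑ : ϑ ∈ Icc t₀ T <;>
      simp [hf, orderedProd, Φ, Ψ, h, not_lt.2, not_le.2, hθ, hϑ]
  set F := fun p : ℝ × ℝ => ∫ t in Icc t₀ T, orderedProd Φ Ψ (p.1 + t) (p.2 + t)
  have hF : Continuous F := continuous_setIntegral_orderedProd hΦ hΨ (Icc t₀ T)
  have hF0 : F 0 = ∫ t in Icc t₀ T, φ t * ψ t :=
    setIntegral_congr_fun measurableSet_Icc fun t ht => by simp [orderedProd, Φ, Ψ, ht]
  have hS : ∀ ε : ℝ, (∫ t in Icc t₀ T, (1 / (4 * ε ^ 2)) *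
      ∫ θ in Icc (t - ε) (t + ε), ∫ ϑ in Icc (t - ε) (t + ε),
        (if θ ∈ Icc t₀ T ∧ ϑ ∈ Icc t₀ T then f θ ϑ else 0)) =
      (4 * ε ^ 2)⁻¹ • ∫ p in closedBall 0 ε, F p := fun ε => by
    simp_rw [hf_eq, integral_const_mul, integral_integral_Icc_integral_Icc_diag hK ε, one_div,
      smul_eq_mul, F]
  rw [← hF0]
  refine (hF.continuousAt.tendsto_inv_smul_setIntegral (hF.stronglyMeasurableAtFilter _ _)
    ((tendsto_closedBall_smallSets 0).mono_left nhdsWithin_le_nhds) ?_ ?_).congr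
    fun ε => (hS ε).symm
  · filter_upwards [self_mem_nhdsWithin] with ε hε using volume_real_closedBall_real_prod 0 hε.le
  · filter_upwards [self_mem_nhdsWithin] with ε hε
      using mul_ne_zero four_ne_zero (pow_ne_zero 2 hε.ne')

theorem stmt_8 (t₀ T : ℝ) (ht : t₀ < T)
    (φ ψ : Lp ℝ 2 (volume.restrict (Icc t₀ T)))
    (f : ℝ → ℝ → ℝ)
    (hf : ∀ t τ : ℝ, f t τ =
      φ t * ψ τ * (if τ ≤ t then 1 else 0) + ψ t * φ τ * (if t < τ then 1 else 0)) :
    Tendsto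
      (fun ε : ℝ =>
        ∫ t in Icc t₀ T,
          (1 / (4 * ε ^ 2)) *
            ∫ θ in Icc (t - ε) (t + ε), ∫ ϑ in Icc (t - ε) (t + ε),
              (if θ ∈ Icc t₀ T ∧ ϑ ∈ Icc t₀ T then f θ ϑ else 0))
      (nhdsWithin 0 (Ioi 0))
      (nhds (∫ t in Icc t₀ T, φ t * ψ t)) :=
  stmt_8_general t₀ T φ ψ f hf
end

section
/- Let φ, ψ : [t₀,T] → ℝ be polynomials and {qᵢ} any orthonormal basis of L²([t₀,T]). Then ∑_{i=0}^∞ [ ∫_{t₀}^{T} φ(t)qᵢ(t)(∫_{t₀}^{t} ψ(τ)qᵢ(τ)dτ)dt + ∫_{t₀}^{T} ψ(t)qᵢ(t)(∫_{t₀}^{t} φ(τ)qᵢ(τ)dτ)dt ] = ∫_{t₀}^{T} φ(t)ψ(t)dt, with absolute convergence of the series. -/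
/-!
For `f, g ∈ L²` and each basis vector `e`, Fubini turns the two iterated integrals of
`f e` against `g e` into integrals of `(f e)(s) (g e)(τ)` over the two triangles `τ ≤ s` and
`s ≤ τ` of the square; these cover the square and meet only on the diagonal, which is null, so
the term equals `⟪f, e⟫ ⟪e, g⟫`. Parseval's identity sums these to `⟪f, g⟫ = ∫ f g`, and the
series converges absolutely by Cauchy–Schwarz in `ℓ²`.
-/

open MeasureTheory Set

theorem MeasureTheory.Measure.prod_diagonal_eq_zero {α : Type*} [MeasurableSpace α]
    [MeasurableEq α] {μ ν : Measure α} [SFinite ν] [NullSingletonClass ν] :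
    μ.prod ν (diagonal α) = 0 := by
  rw [Measure.prod_apply measurableSet_diagonal]
  have slice : ∀ a : α, Prod.mk a ⁻¹' diagonal α = {a} := fun a => by ext; simp [eq_comm]
  simp [slice]

theorem integral_mul_setIntegral_Iic_eq_setIntegral_prod {μ : Measure ℝ} [SFinite μ]
    {f g : ℝ → ℝ} (hf : Integrable f μ) (hg : Integrable g μ) :
    ∫ t, f t * ∫ τ in Iic t, g τ ∂μ ∂μ
      = ∫ p in {p : ℝ × ℝ | p.2 ≤ p.1}, f p.1 * g p.2 ∂μ.prod μ := by
  have hS : MeasurableSet {p : ℝ × ℝ | p.2 ≤ p.1} := measurableSet_le measurable_snd measurable_fst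
  rw [← integral_indicator hS, integral_prod _ ((hf.mul_prod hg).indicator hS)]
  congr 1 with t
  rw [← integral_const_mul, ← integral_indicator measurableSet_Iic]
  congr 1 with τ

theorem integral_mul_setIntegral_Iic_add_symm {μ : Measure ℝ} [SFinite μ] [NullSingletonClass μ]
    {f g : ℝ → ℝ} (hf : Integrable f μ) (hg : Integrable g μ) :
    ∫ t, f t * ∫ τ in Iic t, g τ ∂μ ∂μ + ∫ t, g t * ∫ τ in Iic t, f τ ∂μ ∂μ
      = (∫ t, f t ∂μ) * ∫ t, g t ∂μ := by
  have hfg := hf.mul_prod hg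
  have swap_eq : ∫ p in {p : ℝ × ℝ | p.2 ≤ p.1}, g p.1 * f p.2 ∂μ.prod μ
      = ∫ p in {p : ℝ × ℝ | p.1 ≤ p.2}, f p.1 * g p.2 ∂μ.prod μ := by
    rw [← Measure.measurePreserving_swap.setIntegral_preimage_emb
      MeasurableEquiv.prodComm.measurableEmbedding]
    simp only [Prod.fst_swap, Prod.snd_swap, mul_comm (g _)]
    rfl
  rw [integral_mul_setIntegral_Iic_eq_setIntegral_prod hf hg,
    integral_mul_setIntegral_Iic_eq_setIntegral_prod hg hf, swap_eq,
    ← setIntegral_union₀ _ (measurableSet_le measurable_fst measurable_snd).nullMeasurableSet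
      hfg.integrableOn hfg.integrableOn, ← integral_prod_mul]
  · have cover : {p : ℝ × ℝ | p.2 ≤ p.1} ∪ {p | p.1 ≤ p.2} = univ := by
      ext p; simp [le_total]
    rw [cover, setIntegral_univ]
  · refine measure_mono_null (fun p hp => ?_) Measure.prod_diagonal_eq_zero
    exact le_antisymm hp.2 hp.1

theorem setIntegral_Icc_eq_setIntegral_Iic_restrict {μ : Measure ℝ} {a b t : ℝ} (ht : t ≤ b)
    (k : ℝ → ℝ) : ∫ τ in Icc a t, k τ ∂μ = ∫ τ in Iic t, k τ ∂μ.restrict (Icc a b) := by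
  rw [Measure.restrict_restrict measurableSet_Iic]
  congr 2
  ext τ
  simp only [mem_inter_iff, mem_Iic, mem_Icc]
  exact ⟨fun h => ⟨h.2, h.1, h.2.trans ht⟩, fun h => ⟨h.2.1, h.1⟩⟩

theorem ContinuousOn.memLp_restrict_of_isCompact {α E : Type*} [TopologicalSpace α]
    [MeasurableSpace α] [OpensMeasurableSpace α] [SecondCountableTopology α]
    [NormedAddCommGroup E] {μ : Measure α} [IsFiniteMeasureOnCompacts μ] {s : Set α}
    (hs : IsCompact s) (hsm : MeasurableSet s) {f : α → E} (hf : ContinuousOn f s)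
    (p : ENNReal) : MemLp f p (μ.restrict s) := by
  have : IsFiniteMeasure (μ.restrict s) := isFiniteMeasure_restrict.2 hs.measure_lt_top.ne
  obtain ⟨C, hC⟩ := hs.exists_bound_of_continuousOn hf
  exact .of_bound (hf.aestronglyMeasurable hsm) C ((ae_restrict_iff' hsm).2 (.of_forall hC))

theorem integral_mul_eq_inner_of_ae_eq {α : Type*} [MeasurableSpace α] {μ : Measure α}
    {f g : α → ℝ} {F G : Lp ℝ 2 μ} (hF : F =ᵐ[μ] f) (hG : G =ᵐ[μ] g) :
    ∫ a, f a * g a ∂μ = inner ℝ F G := by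
  rw [L2.inner_def]
  refine integral_congr_ae ?_
  filter_upwards [hF, hG] with a hFa hGa
  simp [hFa, hGa, mul_comm]

theorem HilbertBasis.summable_norm_inner_mul_inner {ι 𝕜 E : Type*} [RCLike 𝕜]
    [NormedAddCommGroup E] [InnerProductSpace 𝕜 E] (b : HilbertBasis ι 𝕜 E) (x y : E) :
    Summable fun i => ‖inner 𝕜 x (b i) * inner 𝕜 (b i) y‖ := by
  refine (lp.summable_mul (by simpa using Real.HolderConjugate.two_two) (b.repr x) (b.repr y)).congr
    fun i => ?_
  rw [norm_mul, b.repr_apply_apply, b.repr_apply_apply, norm_inner_symm]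

theorem integral_mul_setIntegral_Iic_add_symm_eq_inner_mul_inner {μ : Measure ℝ} [SFinite μ]
    [NullSingletonClass μ] {f g : ℝ → ℝ} (hf : MemLp f 2 μ) (hg : MemLp g 2 μ) (e : Lp ℝ 2 μ) :
    ∫ t, f t * e t * ∫ τ in Iic t, g τ * e τ ∂μ ∂μ + ∫ t, g t * e t * ∫ τ in Iic t, f τ * e τ ∂μ ∂μ
      = inner ℝ (hf.toLp f) e * inner ℝ e (hg.toLp g) := by
  rw [integral_mul_setIntegral_Iic_add_symm (f := fun t => f t * e t) (g := fun t => g t * e t)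
      (hf.integrable_mul (Lp.memLp e)) (hg.integrable_mul (Lp.memLp e)),
    integral_mul_eq_inner_of_ae_eq hf.coeFn_toLp .rfl,
    integral_mul_eq_inner_of_ae_eq hg.coeFn_toLp .rfl, real_inner_comm e (hg.toLp g)]

theorem HilbertBasis.hasSum_integral_mul_setIntegral_Iic_add_symm {ι : Type*} {μ : Measure ℝ}
    [SFinite μ] [NullSingletonClass μ] (b : HilbertBasis ι ℝ (Lp ℝ 2 μ)) {f g : ℝ → ℝ}
    (hf : MemLp f 2 μ) (hg : MemLp g 2 μ) :
    Summable (fun i => |∫ t, f t * b i t * ∫ τ in Iic t, g τ * b i τ ∂μ ∂μ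
        + ∫ t, g t * b i t * ∫ τ in Iic t, f τ * b i τ ∂μ ∂μ|) ∧
      HasSum (fun i => ∫ t, f t * b i t * ∫ τ in Iic t, g τ * b i τ ∂μ ∂μ
        + ∫ t, g t * b i t * ∫ τ in Iic t, f τ * b i τ ∂μ ∂μ) (∫ t, f t * g t ∂μ) := by
  simp only [integral_mul_setIntegral_Iic_add_symm_eq_inner_mul_inner hf hg,
    integral_mul_eq_inner_of_ae_eq hf.coeFn_toLp hg.coeFn_toLp]
  exact ⟨b.summable_norm_inner_mul_inner _ _, b.hasSum_inner_mul_inner _ _⟩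

theorem stmt_12_general (t₀ T : ℝ) (φ ψ : Polynomial ℝ)
    (q : HilbertBasis ℕ ℝ (Lp ℝ 2 (volume.restrict (Icc t₀ T)))) :
    Summable
      (fun i : ℕ => |(∫ t in Icc t₀ T, φ.eval t * (q i : Lp ℝ 2 (volume.restrict (Icc t₀ T))) t *
            ∫ τ in Icc t₀ t, ψ.eval τ * (q i : Lp ℝ 2 (volume.restrict (Icc t₀ T))) τ)
          + ∫ t in Icc t₀ T, ψ.eval t * (q i : Lp ℝ 2 (volume.restrict (Icc t₀ T))) t *
            ∫ τ in Icc t₀ t, φ.eval τ * (q i : Lp ℝ 2 (volume.restrict (Icc t₀ T))) τ|) ∧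
    HasSum
      (fun i : ℕ =>
        (∫ t in Icc t₀ T, φ.eval t * (q i : Lp ℝ 2 (volume.restrict (Icc t₀ T))) t *
            ∫ τ in Icc t₀ t, ψ.eval τ * (q i : Lp ℝ 2 (volume.restrict (Icc t₀ T))) τ)
          + ∫ t in Icc t₀ T, ψ.eval t * (q i : Lp ℝ 2 (volume.restrict (Icc t₀ T))) t *
            ∫ τ in Icc t₀ t, φ.eval τ * (q i : Lp ℝ 2 (volume.restrict (Icc t₀ T))) τ)
      (∫ t in Icc t₀ T, φ.eval t * ψ.eval t) := by
  have iterated_Icc_eq_Iic (f g : ℝ → ℝ) : ∫ t in Icc t₀ T, f t * ∫ τ in Icc t₀ t, g τ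
      = ∫ t in Icc t₀ T, f t * ∫ τ in Iic t, g τ ∂volume.restrict (Icc t₀ T) :=
    setIntegral_congr_fun measurableSet_Icc fun t ht => by
      rw [setIntegral_Icc_eq_setIntegral_Iic_restrict ht.2]
  have memLp (p : Polynomial ℝ) : MemLp (fun t => p.eval t) 2 (volume.restrict (Icc t₀ T)) :=
    p.continuous.continuousOn.memLp_restrict_of_isCompact isCompact_Icc measurableSet_Icc 2
  simp only [iterated_Icc_eq_Iic]
  exact q.hasSum_integral_mul_setIntegral_Iic_add_symm (memLp φ) (memLp ψ)

theorem stmt_12 (t₀ T : ℝ) (ht : t₀ < T) (φ ψ : Polynomial ℝ)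
    (q : HilbertBasis ℕ ℝ (Lp ℝ 2 (volume.restrict (Icc t₀ T)))) :
    Summable
      (fun i : ℕ => |(∫ t in Icc t₀ T, φ.eval t * (q i : Lp ℝ 2 (volume.restrict (Icc t₀ T))) t *
            ∫ τ in Icc t₀ t, ψ.eval τ * (q i : Lp ℝ 2 (volume.restrict (Icc t₀ T))) τ)
          + ∫ t in Icc t₀ T, ψ.eval t * (q i : Lp ℝ 2 (volume.restrict (Icc t₀ T))) t *
            ∫ τ in Icc t₀ t, φ.eval τ * (q i : Lp ℝ 2 (volume.restrict (Icc t₀ T))) τ|) ∧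
    HasSum
      (fun i : ℕ =>
        (∫ t in Icc t₀ T, φ.eval t * (q i : Lp ℝ 2 (volume.restrict (Icc t₀ T))) t *
            ∫ τ in Icc t₀ t, ψ.eval τ * (q i : Lp ℝ 2 (volume.restrict (Icc t₀ T))) τ)
          + ∫ t in Icc t₀ T, ψ.eval t * (q i : Lp ℝ 2 (volume.restrict (Icc t₀ T))) t *
            ∫ τ in Icc t₀ t, φ.eval τ * (q i : Lp ℝ 2 (volume.restrict (Icc t₀ T))) τ)
      (∫ t in Icc t₀ T, φ.eval t * ψ.eval t) :=
  stmt_12_general t₀ T φ ψ q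
end
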